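/- Each local block operator T_j f = ∫_{F_j} ∫_{G_j} ⟨f, f_x⟩ ⟨T f̃_x, f_y⟩ f̃_y dλ(x) dλ(y) is a compact operator on H. -/

import Mathlib

open MeasureTheory Filter Metric
open scoped ComplexInnerProductSpace Topology

/-- A pair of families `(F, G)` in a Hilbert space, indexed by a metric measure
space, is `p`-weakly localized: the `p`-weighted Schur-type integral bounds hold,
and the tail integrals over complements of balls tend to `0` uniformly. -/
def WeaklyLocalized {H X : Type*} [NormedAddCommGroup H] [InnerProductSpace ℂ H]
    [MetricSpace X] [MeasurableSpace X] (μ : Measure X) (p : X → ℝ)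
    (F G : X → H) : Prop :=
  (∃ C : ℝ, ∀ x, ∫ y, ‖(⟪F x, G y⟫ : ℂ)‖ * p y ∂μ ≤ C * p x) ∧
  (∃ C : ℝ, ∀ y, ∫ x, ‖(⟪F x, G y⟫ : ℂ)‖ * p x ∂μ ≤ C * p y) ∧
  Tendsto (fun R : ℝ => ⨆ x : X, (p x)⁻¹ * ∫ y in (closedBall x R)ᶜ,
      ‖(⟪F x, G y⟫ : ℂ)‖ * p y ∂μ) atTop (𝓝 0) ∧
  Tendsto (fun R : ℝ => ⨆ y : X, (p y)⁻¹ * ∫ x in (closedBall y R)ᶜ,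
      ‖(⟪F x, G y⟫ : ℂ)‖ * p x ∂μ) atTop (𝓝 0)

/-! The block operator is `v ↦ ∫_{F_j} a_v(y) f̃_y dλ(y)` with
`a_v(y) = ∫_{G_j} ⟨v, f_x⟩ ⟨T f̃_x, f_y⟩ dλ(x)`. The kernel is continuous, hence bounded on the
compact set `closure F_j × G_j`, which has finite measure; so for `‖v‖ ≤ 1` the coefficients are
uniformly bounded and `T_j v` is the integral, against a finite measure, of a function with values
in the compact set `{c f̃_y : |c| ≤ C, y ∈ closure F_j}`. Such integrals lie in a fixed multiple of
the closed convex hull of that set, which is compact by Mazur's theorem, so `T_j` maps the unit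
ball into a compact set. -/

open Set Bornology
open scoped InnerProductSpace Pointwise

section ClosedConvexHull

variable {X E : Type*} [MeasurableSpace X] [NormedAddCommGroup E] [NormedSpace ℝ E]
  [CompleteSpace E]

theorem isCompact_closedConvexHull {K : Set E} (hK : IsCompact K) :
    IsCompact (closedConvexHull ℝ K) := by
  rw [closedConvexHull_eq_closure_convexHull]
  exact hK.totallyBounded.convexHull.closure.isCompact_of_isClosed isClosed_closure

/-- `0` is adjoined because a non-integrable `f` has integral `0`. -/
theorem integral_mem_smul_closedConvexHull (ν : Measure X) [IsFiniteMeasure ν] {K : Set E}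
    {f : X → E} (hf : ∀ᵐ x ∂ν, f x ∈ K) :
    ∫ x, f x ∂ν ∈ ν.real univ • closedConvexHull ℝ (insert 0 K) := by
  have h0 : (0 : E) ∈ closedConvexHull ℝ (insert 0 K) :=
    subset_closedConvexHull (mem_insert _ _)
  by_cases hfi : Integrable f ν
  swap
  · rw [integral_undef hfi]
    exact ⟨0, h0, smul_zero _⟩
  rw [← measure_smul_average]
  refine smul_mem_smul_set ?_
  rcases eq_zero_or_neZero ν with rfl | hν
  · rwa [average_zero_measure]
  · exact convex_closedConvexHull.average_mem isClosed_closedConvexHull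
      (hf.mono fun x hx => subset_closedConvexHull (mem_insert_of_mem _ hx)) hfi

theorem isCompactOperator_of_forall_eq_integral {M : Type*} [TopologicalSpace M]
    [Zero M] {T : M → E} (ν : Measure X) [IsFiniteMeasure ν] {K : Set E} (hK : IsCompact K)
    {V : Set M} (hV : V ∈ 𝓝 0)
    (hT : ∀ v ∈ V, ∃ f : X → E, (∀ᵐ x ∂ν, f x ∈ K) ∧ T v = ∫ x, f x ∂ν) :
    IsCompactOperator T := by
  refine ⟨_, (isCompact_closedConvexHull (hK.insert 0)).smul (ν.real univ),
    mem_of_superset hV fun v hv => ?_⟩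
  obtain ⟨f, hfK, hTv⟩ := hT v hv
  rw [mem_preimage, hTv]
  exact integral_mem_smul_closedConvexHull ν hfK

end ClosedConvexHull

section InnerProduct

variable {X 𝕜 E H : Type*} [MeasurableSpace X] [RCLike 𝕜] [NormedAddCommGroup E]
  [NormedAddCommGroup H] [InnerProductSpace 𝕜 H] [NormedSpace ℝ H] [CompleteSpace H]

theorem eq_integral_smul_of_forall_inner_eq {ν : Measure X} {a : X → 𝕜} {u : X → H}
    (hint : Integrable (fun x => a x • u x) ν) {z : H}
    (hz : ∀ g, ⟪g, z⟫_𝕜 = ∫ x, a x * ⟪g, u x⟫_𝕜 ∂ν) : z = ∫ x, a x • u x ∂ν :=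
  ext_inner_left 𝕜 fun g => by simp_rw [hz, ← integral_inner hint, inner_smul_right]

theorem isCompactOperator_of_inner_eq_integral (ν : Measure X) [IsFiniteMeasure ν] {A : E → H}
    {a : E → X → 𝕜} {u : X → H} {C : ℝ} {K : Set H} (hK : IsCompact K)
    (ha : ∀ v, AEStronglyMeasurable (a v) ν) (ha_le : ∀ v, ‖v‖ ≤ 1 → ∀ᵐ y ∂ν, ‖a v y‖ ≤ C)
    (hu : AEStronglyMeasurable u ν) (huK : ∀ᵐ y ∂ν, u y ∈ K)
    (hA : ∀ v g, ⟪g, A v⟫_𝕜 = ∫ y, a v y * ⟪g, u y⟫_𝕜 ∂ν) : IsCompactOperator A := by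
  have hCK : IsCompact (closedBall (0 : 𝕜) C • K) := (isCompact_closedBall 0 C).smul_set hK
  obtain ⟨R, hR⟩ := hCK.isBounded.exists_norm_le
  refine isCompactOperator_of_forall_eq_integral ν hCK (closedBall_mem_nhds 0 one_pos)
    fun v hv => ?_
  have hmem : ∀ᵐ y ∂ν, a v y • u y ∈ closedBall (0 : 𝕜) C • K := by
    filter_upwards [ha_le v (mem_closedBall_zero_iff.1 hv), huK] with y hay huy
    exact smul_mem_smul (mem_closedBall_zero_iff.2 hay) huy
  refine ⟨_, hmem, eq_integral_smul_of_forall_inner_eq ?_ (hA v)⟩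
  exact .of_bound ((ha v).smul hu) R (hmem.mono fun y hy => hR _ hy)

end InnerProduct

theorem isCompact_setOf_infDist_le {X : Type*} [PseudoMetricSpace X] [ProperSpace X] {s : Set X}
    (hs : IsBounded s) (hne : s.Nonempty) (r : ℝ) : IsCompact {x | infDist x s ≤ r} := by
  refine isCompact_of_isClosed_isBounded (isClosed_le (continuous_infDist_pt s) continuous_const)
    ((hs.thickening (δ := r + 1)).subset fun x hx => ?_)
  exact (mem_thickening_iff_infDist_lt hne).2 (lt_of_le_of_lt hx (lt_add_one r))

section Kernel

variable {X 𝕜 H : Type*} [MetricSpace X] [ProperSpace X] [MeasurableSpace X]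
  [OpensMeasurableSpace X] [RCLike 𝕜] [NormedAddCommGroup H] [InnerProductSpace 𝕜 H]
  [NormedSpace ℝ H] [CompleteSpace H]

theorem isCompactOperator_of_inner_eq_integral_kernel (μ : Measure X) [IsLocallyFiniteMeasure μ]
    {s t : Set X} (hs : MeasurableSet s) (hs_bdd : IsBounded s) (ht : IsCompact t)
    {F u : X → H} (hF : Continuous F) (hu : Continuous u) {k : X → X → 𝕜}
    (hk : Continuous (Function.uncurry k)) {A : H → H}
    (hA : ∀ v g, ⟪g, A v⟫_𝕜 = ∫ y in s, (∫ x in t, ⟪F x, v⟫_𝕜 * k y x ∂μ) * ⟪g, u y⟫_𝕜 ∂μ) :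
    IsCompactOperator A := by
  have hs_cpt : IsCompact (closure s) := hs_bdd.isCompact_closure
  have : IsFiniteMeasure (μ.restrict s) :=
    isFiniteMeasure_restrict.2 ((measure_mono subset_closure).trans_lt hs_cpt.measure_lt_top).ne
  obtain ⟨CF, hCF⟩ := ht.exists_bound_of_continuousOn hF.continuousOn
  obtain ⟨Ck, hCk⟩ := (hs_cpt.prod ht).exists_bound_of_continuousOn hk.continuousOn
  have ha_cont : ∀ v, Continuous fun y => ∫ x in t, ⟪F x, v⟫_𝕜 * k y x ∂μ := fun v =>
    continuous_parametric_integral_of_continuous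
      (((hF.comp continuous_snd).inner continuous_const).mul hk) ht
  refine isCompactOperator_of_inner_eq_integral (μ.restrict s) (hs_cpt.image hu)
    (C := CF * Ck * μ.real t) (fun v => (ha_cont v).aestronglyMeasurable) (fun v hv => ?_)
    hu.aestronglyMeasurable
    ((ae_restrict_mem hs).mono fun y hy => mem_image_of_mem u (subset_closure hy)) hA
  filter_upwards [ae_restrict_mem hs] with y hy
  refine norm_setIntegral_le_of_norm_le_const ht.measure_lt_top fun x hx => ?_
  have hFx := hCF x hx
  calc ‖⟪F x, v⟫_𝕜 * k y x‖ ≤ (‖F x‖ * ‖v‖) * ‖k y x‖ := by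
        rw [norm_mul]; gcongr; exact norm_inner_le_norm _ _
    _ ≤ ‖F x‖ * ‖k y x‖ := by gcongr; exact mul_le_of_le_one_right (norm_nonneg _) hv
    _ ≤ CF * Ck := mul_le_mul hFx (hCk (y, x) ⟨subset_closure hy, hx⟩) (norm_nonneg _)
        ((norm_nonneg _).trans hFx)

end Kernel

theorem block_operator_compact_general
    {H X : Type*} [NormedAddCommGroup H] [InnerProductSpace ℂ H] [CompleteSpace H]
    [MetricSpace X] [ProperSpace X] [MeasurableSpace X] [OpensMeasurableSpace X]
    (μ : Measure X)
    (F Ft : X → H) (hFcont : Continuous F) (hFtcont : Continuous Ft)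
    (hμbdd : ∀ s : Set X, Bornology.IsBounded s → μ s < ⊤)
    (T : H →L[ℂ] H)
    (Fj : Set X) (hFjmeas : MeasurableSet Fj) (hFjbdd : Bornology.IsBounded Fj)
    (r : ℝ)
    (Tj : H →L[ℂ] H)
    (hTj : ∀ v g : H, (⟪g, Tj v⟫ : ℂ) =
      ∫ y in Fj, (∫ x in {x : X | infDist x Fj ≤ r},
        (⟪F x, v⟫ : ℂ) * (⟪F y, T (Ft x)⟫ : ℂ) ∂μ) * (⟪g, Ft y⟫ : ℂ) ∂μ) :
    IsCompactOperator Tj := by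
  rcases Fj.eq_empty_or_nonempty with rfl | hFj
  · have hTj0 : ⇑Tj = 0 := funext fun v => ext_inner_left ℂ fun g => by simp [hTj]
    exact hTj0 ▸ isCompactOperator_zero
  have : IsLocallyFiniteMeasure μ :=
    ⟨fun x => ⟨ball x 1, ball_mem_nhds x one_pos, hμbdd _ isBounded_ball⟩⟩
  exact isCompactOperator_of_inner_eq_integral_kernel μ hFjmeas hFjbdd
    (isCompact_setOf_infDist_le hFjbdd hFj r) hFcont hFtcont
    ((hFcont.comp continuous_fst).inner (T.continuous.comp (hFtcont.comp continuous_snd))) hTj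

/-- Each local block operator
`T_j f = ∫_{F_j} ∫_{G_j} ⟨f, f_x⟩ ⟨T f̃_x, f_y⟩ f̃_y dλ(x) dλ(y)` associated with a
bounded Borel set `Fj` and its `r`-enlargement `Gj` is a compact operator. -/
theorem block_operator_compact
    {H X : Type*} [NormedAddCommGroup H] [InnerProductSpace ℂ H] [CompleteSpace H]
    [MetricSpace X] [ProperSpace X] [MeasurableSpace X] [OpensMeasurableSpace X]
    (μ : Measure X) (p : X → ℝ) (hp : ∀ x, 0 < p x)
    (F Ft : X → H) (hFcont : Continuous F) (hFtcont : Continuous Ft)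
    (hbdd : ∃ M : ℝ, ∀ x, ‖F x‖ ≤ M ∧ ‖Ft x‖ ≤ M)
    (hμbdd : ∀ s : Set X, Bornology.IsBounded s → μ s < ⊤)
    (hframe : ∃ c C : ℝ, 0 < c ∧ ∀ v : H,
      c * ‖v‖ ^ 2 ≤ (∫ x, ‖(⟪F x, v⟫ : ℂ)‖ ^ 2 ∂μ) ∧
      (∫ x, ‖(⟪F x, v⟫ : ℂ)‖ ^ 2 ∂μ) ≤ C * ‖v‖ ^ 2)
    (T : H →L[ℂ] H)
    (hloc : WeaklyLocalized μ p (fun x => T (Ft x)) F)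
    (Fj : Set X) (hFjmeas : MeasurableSet Fj) (hFjbdd : Bornology.IsBounded Fj)
    (r : ℝ) (hr : 0 < r)
    (Tj : H →L[ℂ] H)
    (hTj : ∀ v g : H, (⟪g, Tj v⟫ : ℂ) =
      ∫ y in Fj, (∫ x in {x : X | infDist x Fj ≤ r},
        (⟪F x, v⟫ : ℂ) * (⟪F y, T (Ft x)⟫ : ℂ) ∂μ) * (⟪g, Ft y⟫ : ℂ) ∂μ) :
    IsCompactOperator Tj :=
  block_operator_compact_general μ F Ft hFcont hFtcont hμbdd T Fj hFjmeas hFjbdd r Tj hTj
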